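/- Let S be a substring-free set of strings over the DNA alphabet and let CYC(G_S) be an optimal cycle cover of the distance graph G_S whose cycles are C = s'_{i1},…,s'_{ir},s'_{i1}. Let T be the set consisting of the string ⟨s'_{i1},…,s'_{ir}⟩ for each cycle C of CYC(G_S). Then OPT(T) ≤ OPT(S) + w(CYC(G_S)) ≤ 2·OPT(S). -/

import Mathlib

/-- The DNA alphabet. -/
inductive DNA : Type
  | A | T | G | C
  deriving DecidableEq, Repr

/-- Complement of a DNA base: a↔t, g↔c. -/
def DNA.compl : DNA → DNA
  | .A => .T
  | .T => .A
  | .G => .C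
  | .C => .G

/-- Strings over the DNA alphabet. -/
abbrev Str : Type := List DNA

/-- Reverse complement of a string. -/
def rc (s : Str) : Str := (s.map DNA.compl).reverse

/-- An approximate solution for the SCS-RC instance `S`: a string containing,
for each `s ∈ S`, either `s` or its reverse complement as a substring. -/
def ApproxSol (S : Finset Str) (u : Str) : Prop :=
  ∀ s ∈ S, s <:+: u ∨ rc s <:+: u

/-- `OPT S` is the minimum length of an approximate solution for the SCS-RC instance `S`. -/
noncomputable def OPT (S : Finset Str) : ℕ :=
  sInf {n | ∃ u : Str, ApproxSol S u ∧ u.length = n}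

/-- `S` is substring-free: no string of `S ∪ S̄^R` is a substring of another. -/
def SubstrFree (S : Finset Str) : Prop :=
  ∀ x, (x ∈ S ∨ rc x ∈ S) → ∀ y, (y ∈ S ∨ rc y ∈ S) → x ≠ y → ¬ x <:+: y

/-- `ov x y`: the length of the longest string `v` such that `x = u ++ v` and
`y = v ++ w` for nonempty `u`, `w`. -/
noncomputable def ov (x y : Str) : ℕ :=
  sSup {k | ∃ v : Str, v.length = k ∧ (∃ u : Str, u ≠ [] ∧ x = u ++ v) ∧
        (∃ w : Str, w ≠ [] ∧ y = v ++ w)}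

/-- `prefStr x y = pref(x, y)`: the prefix of `x` with respect to `y`. -/
noncomputable def prefStr (x y : Str) : Str := x.take (x.length - ov x y)

/-- `distStr x y = dist(x, y) = |x| - ov(x, y)`. -/
noncomputable def distStr (x y : Str) : ℕ := x.length - ov x y

/-- The merge `⟨x, y⟩ = pref(x, y) ++ y`. -/
noncomputable def mergeStr (x y : Str) : Str := prefStr x y ++ y

/-- `superstr [x1, …, xr] = ⟨x1, …, xr⟩ = pref(x1,x2) ⋯ pref(x_{r-1},x_r) ++ x_r`. -/
noncomputable def superstr : List Str → Str
  | [] => []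
  | [x] => x
  | x :: y :: rest => prefStr x y ++ superstr (y :: rest)

/-- `‖S‖`: the total length of the strings of the finite set `S`. -/
def normS (S : Finset Str) : ℕ := ∑ s ∈ S, s.length

/-- Pairs `(x, y)` of strings from the collection `S` or their reverse complements,
with `x = y`, or with `x ≠ y` and `rc x ≠ y`, as considered by MGREEDY-RC. -/
def ValidPair (S : Finset Str) (x y : Str) : Prop :=
  (x ∈ S ∨ rc x ∈ S) ∧ (y ∈ S ∨ rc y ∈ S) ∧ (x = y ∨ (x ≠ y ∧ rc x ≠ y))

/-- `MGreedyExec S T`: some execution of MGREEDY-RC starting from the collection `S`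
(under some tie-breaking among pairs of maximum overlap) produces the set `T`. -/
inductive MGreedyExec : Finset Str → Finset Str → Prop
  | done : MGreedyExec ∅ ∅
  | close (S T : Finset Str) (x : Str)
      (hx : x ∈ S ∨ rc x ∈ S)
      (hmax : ∀ a b, ValidPair S a b → ov a b ≤ ov x x)
      (h : MGreedyExec (S \ {x, rc x}) T) :
      MGreedyExec S (insert x T)
  | merge (S T : Finset Str) (x y : Str)
      (hx : x ∈ S ∨ rc x ∈ S) (hy : y ∈ S ∨ rc y ∈ S)
      (hne : x ≠ y) (hrc : rc x ≠ y)
      (hmax : ∀ a b, ValidPair S a b → ov a b ≤ ov x y)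
      (h : MGreedyExec (insert (mergeStr x y) (S \ {x, rc x, y, rc y})) T) :
      MGreedyExec S T

/-- `GreedyExec S u`: some execution of GREEDY-RC starting from the collection `S`
(under some tie-breaking among pairs of maximum overlap) outputs the string `u`. -/
inductive GreedyExec : Finset Str → Str → Prop
  | single (x : Str) : GreedyExec {x} x
  | merge (S : Finset Str) (u x y : Str)
      (hx : x ∈ S ∨ rc x ∈ S) (hy : y ∈ S ∨ rc y ∈ S)
      (hne : x ≠ y) (hrc : rc x ≠ y)
      (hmax : ∀ a b, (a ∈ S ∨ rc a ∈ S) → (b ∈ S ∨ rc b ∈ S) → a ≠ b → rc a ≠ b →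
        ov a b ≤ ov x y)
      (hcard : 1 < S.card)
      (h : GreedyExec (insert (mergeStr x y) (S \ {x, rc x, y, rc y})) u) :
      GreedyExec S u

/-- Reverse complement of a path: the path of the reverse complements, reversed. -/
def rcPath (p : List Str) : List Str := (p.map rc).reverse

/-- Valid pairs for the path-level description of MGREEDY-RC, where each collection
element is the path of original strings composing it, its string value being `superstr`. -/
def ValidPairP (P : Finset (List Str)) (p q : List Str) : Prop :=
  (p ∈ P ∨ rcPath p ∈ P) ∧ (q ∈ P ∨ rcPath q ∈ P) ∧
  (superstr p = superstr q ∨ (superstr p ≠ superstr q ∧ rc (superstr p) ≠ superstr q))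

/-- `MGreedyCyc P C`: the path-level description of an execution of MGREEDY-RC.
Starting from the collection of paths `P`, merging the paths `p` and `q` (adding the
edge from the last vertex of `p` to the first of `q`) when the corresponding strings
are merged, and closing the path `p` into the cycle `p` (with the edge from its last
vertex to its first) when the corresponding string is moved to `T`, some execution
produces the set of closed cycles `C`. -/
inductive MGreedyCyc : Finset (List Str) → Finset (List Str) → Prop
  | done : MGreedyCyc ∅ ∅
  | close (P C : Finset (List Str)) (p : List Str)
      (hp : p ∈ P ∨ rcPath p ∈ P)
      (hmax : ∀ q₁ q₂, ValidPairP P q₁ q₂ →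
        ov (superstr q₁) (superstr q₂) ≤ ov (superstr p) (superstr p))
      (h : MGreedyCyc (P \ {p, rcPath p}) C) :
      MGreedyCyc P (insert p C)
  | merge (P C : Finset (List Str)) (p q : List Str)
      (hp : p ∈ P ∨ rcPath p ∈ P) (hq : q ∈ P ∨ rcPath q ∈ P)
      (hne : superstr p ≠ superstr q) (hrc : rc (superstr p) ≠ superstr q)
      (hmax : ∀ q₁ q₂, ValidPairP P q₁ q₂ →
        ov (superstr q₁) (superstr q₂) ≤ ov (superstr p) (superstr q))
      (h : MGreedyCyc (insert (p ++ q) (P \ {p, rcPath p, q, rcPath q})) C) :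
      MGreedyCyc P C

/-- The weight of the cycle `x1, …, xr, x1` given by the list `[x1, …, xr]`:
`Σ_{i=1}^{r} dist(x_i, x_{i+1})` with indices modulo `r`. -/
noncomputable def cycleWeight (c : List Str) : ℕ :=
  ((c.zip (c.rotate 1)).map fun p => distStr p.1 p.2).sum

/-- `C` is a cycle cover of the distance graph `G_S`: a set of vertex-disjoint cycles
on vertices of `S ∪ S̄^R` such that for each `s ∈ S` exactly one of `s` and `rc s`
is contained in the cycles. -/
def IsCycleCover (S : Finset Str) (C : Finset (List Str)) : Prop :=
  (∀ c ∈ C, c ≠ []) ∧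
  (∀ c ∈ C, c.Nodup) ∧
  (∀ c ∈ C, ∀ d ∈ C, c ≠ d → ∀ x ∈ c, x ∉ d) ∧
  (∀ c ∈ C, ∀ x ∈ c, x ∈ S ∨ rc x ∈ S) ∧
  (∀ s ∈ S, Xor' (∃ c ∈ C, s ∈ c) (∃ c ∈ C, rc s ∈ c))

/-- The total weight of a cycle cover. -/
noncomputable def coverWeight (C : Finset (List Str)) : ℕ := ∑ c ∈ C, cycleWeight c

/-- `minCoverWeight S = w(CYC(G_S))`: the minimum total weight of a cycle cover of `G_S`. -/
noncomputable def minCoverWeight (S : Finset Str) : ℕ :=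
  sInf {n | ∃ C : Finset (List Str), IsCycleCover S C ∧ coverWeight C = n}

/-- `x` is a factor of `s`: `s = x^i ++ y` for some `i ≥ 1` and some prefix `y` of `x`. -/
def IsFactor (x s : Str) : Prop :=
  x ≠ [] ∧ ∃ i : ℕ, 1 ≤ i ∧ ∃ y : Str, y <+: x ∧ s = (List.replicate i x).flatten ++ y

/-- `period s`: the length of the shortest factor of `s`. -/
noncomputable def periodStr (s : Str) : ℕ :=
  sInf {k | ∃ x : Str, IsFactor x s ∧ x.length = k}

open Classical in
/-- `factorStr s`: a shortest factor of `s`. -/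
noncomputable def factorStr (s : Str) : Str :=
  if h : ∃ x : Str, IsFactor x s ∧ x.length = periodStr s then h.choose else []

/-- Two strings are equivalent if the factor of one is a cyclic shift of the factor
of the other. -/
def EquivStr (x y : Str) : Prop :=
  ∃ e f : Str, factorStr x = e ++ f ∧ factorStr y = f ++ e

/-!
Fix a shortest approximate solution `u` of `S`.

Choosing for every string of `S` the orientation that occurs in `u` and listing these by their
first occurrence gives a single cycle. As `S` is substring-free, consecutive strings of this list
overlap at least as much as their occurrences in `u` do, so the cycle weighs at most `|u|`; hence
`w(CYC(G_S)) ≤ OPT(S)`.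

Conversely, for a cycle `c = x₁, …, x_r` the string `⟨x₁, …, x_r, x₁⟩` starts and ends with `x₁`,
has length `|x₁| + w(c)` and contains `⟨x₁, …, x_r⟩`. Splicing it (or its reverse complement) into
`u` in place of an occurrence of `x₁` (or of `x̄₁^R`), for all cycles from right to left, gives an
approximate solution of `T` of length `|u| + w(CYC(G_S))`.
-/

lemma DNA.compl_compl (a : DNA) : a.compl.compl = a := by cases a <;> rfl

@[simp] lemma rc_rc (s : Str) : rc (rc s) = s := by
  simp [rc, List.map_reverse, Function.comp_def, DNA.compl_compl]

@[simp] lemma length_rc (s : Str) : (rc s).length = s.length := by simp [rc]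

lemma rc_prefix_rc {x y : Str} (h : x <:+ y) : rc x <+: rc y :=
  List.reverse_prefix.2 (h.map _)

lemma rc_suffix_rc {x y : Str} (h : x <+: y) : rc x <:+ rc y :=
  List.reverse_suffix.2 (h.map _)

lemma rc_infix_rc {x y : Str} (h : x <:+: y) : rc x <:+: rc y :=
  (h.map _).reverse

section Occurrences

variable {α : Type*}

lemma prefix_drop_of_prefix_of_le {y w P : List α} {t : ℕ} (hy : y <+: w.drop t)
    (hP : P <+: w) (ht : t + y.length ≤ P.length) : y <+: P.drop t := by
  obtain ⟨r, rfl⟩ := hP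
  rw [List.drop_append_of_le_length (by omega)] at hy
  exact List.prefix_of_prefix_length_le hy (List.prefix_append _ _) (by simp; omega)

lemma infix_of_prefix_drop_of_le {x y w : List α} {p q : ℕ} (hy : y <+: w.drop q)
    (hx : x <+: w.drop p) (hqp : q ≤ p) (hend : p + x.length ≤ q + y.length) : x <:+: y := by
  have hx' : x <+: (w.drop q).drop (p - q) := by
    rwa [List.drop_drop, show q + (p - q) = p by omega]
  exact (prefix_drop_of_prefix_of_le hx' hy (by omega)).isInfix.trans
    (List.drop_suffix _ _).isInfix

lemma exists_forall_infix_prefix_drop (u : List α) :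
    ∃ pos : List α → ℕ, ∀ y, y <:+: u → y <+: u.drop (pos y) := by
  have h : ∀ y, ∃ t, y <:+: u → y <+: u.drop t := by
    intro y
    by_cases hy : y <:+: u
    · obtain ⟨a, b, rfl⟩ := hy
      exact ⟨a.length, fun _ => by simp⟩
    · exact ⟨0, fun h => absurd h hy⟩
  choose pos hpos using h
  exact ⟨pos, hpos⟩

end Occurrences

def ovLengths (x y : Str) : Set ℕ :=
  {k | ∃ v : Str, v.length = k ∧ (∃ u : Str, u ≠ [] ∧ x = u ++ v) ∧
        (∃ w : Str, w ≠ [] ∧ y = v ++ w)}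

lemma bddAbove_ovLengths (x y : Str) : BddAbove (ovLengths x y) :=
  ⟨x.length, by rintro _ ⟨v, rfl, ⟨u, -, rfl⟩, -⟩; simp⟩

lemma le_ov {x y : Str} {k : ℕ} (h : k ∈ ovLengths x y) : k ≤ ov x y :=
  le_csSup (bddAbove_ovLengths x y) h

lemma length_prefStr (x y : Str) : (prefStr x y).length = distStr x y := by
  simp [prefStr, distStr]

lemma prefix_prefStr_append (x y : Str) : x <+: prefStr x y ++ y := by
  rcases (ovLengths x y).eq_empty_or_nonempty with h | h
  · have h0 : ov x y = 0 := by
      show sSup (ovLengths x y) = 0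
      rw [h, csSup_empty, bot_eq_zero]
    simp [prefStr, h0]
  · obtain ⟨v, hv, ⟨a, -, hx⟩, ⟨b, -, hy⟩⟩ := Nat.sSup_mem h (bddAbove_ovLengths x y)
    have hpref : prefStr x y = a := by
      have hov : ov x y = v.length := hv.symm
      rw [prefStr, hov, hx]
      simp
    rw [hpref, hy, hx, ← List.append_assoc]
    exact List.prefix_append _ _

lemma distStr_le_sub {u v z : Str} {p q : ℕ} (hv : v <+: u.drop p) (hz : z <+: u.drop q)
    (hpq : p < q) (hzv : ¬ z <:+: v) : distStr v z ≤ q - p := by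
  by_cases hshort : v.length ≤ q - p
  · exact (Nat.sub_le _ _).trans hshort
  have hend : p + v.length < q + z.length := by
    by_contra! h
    exact hzv (infix_of_prefix_drop_of_le hv hz hpq.le h)
  have hborder : v.drop (q - p) <+: z := by
    have h : v.drop (q - p) <+: u.drop q := by
      simpa [List.drop_drop, show p + (q - p) = q by omega] using hv.drop (q - p)
    exact List.prefix_of_prefix_length_le h hz (by simp; omega)
  obtain ⟨r, hr⟩ := hborder
  have hk : v.length - (q - p) ∈ ovLengths v z := by
    refine ⟨v.drop (q - p), by simp, ⟨v.take (q - p), ?_, by simp⟩, ⟨r, ?_, hr.symm⟩⟩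
    · exact List.ne_nil_of_length_pos (by simp; omega)
    · rintro rfl
      have := congrArg List.length hr
      simp at this
      omega
  have := le_ov hk
  unfold distStr
  omega

noncomputable def pathWeight : List Str → ℕ
  | [] => 0
  | [_] => 0
  | x :: y :: r => distStr x y + pathWeight (y :: r)

lemma superstr_cons_cons (x y : Str) (r : List Str) :
    superstr (x :: y :: r) = prefStr x y ++ superstr (y :: r) := rfl

lemma prefix_superstr_cons (x : Str) : ∀ l : List Str, x <+: superstr (x :: l)
  | [] => List.prefix_refl x
  | y :: r => (prefix_prefStr_append x y).trans
      ((List.prefix_append_right_inj _).2 (prefix_superstr_cons y r))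

lemma superstr_prefix_superstr_append :
    ∀ (x : Str) (l m : List Str), superstr (x :: l) <+: superstr (x :: (l ++ m))
  | x, [], m => prefix_superstr_cons x m
  | x, y :: r, m => by
    rw [List.cons_append, superstr_cons_cons, superstr_cons_cons]
    exact (List.prefix_append_right_inj _).2 (superstr_prefix_superstr_append y r m)

lemma getLast_suffix_superstr :
    ∀ (x : Str) (l : List Str), (x :: l).getLast (List.cons_ne_nil _ _) <:+ superstr (x :: l)
  | x, [] => List.suffix_refl x
  | x, y :: r => by
    rw [List.getLast_cons (List.cons_ne_nil _ _), superstr_cons_cons]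
    exact (getLast_suffix_superstr y r).trans (List.suffix_append _ _)

lemma length_superstr_cons : ∀ (x : Str) (l : List Str),
    (superstr (x :: l)).length =
      pathWeight (x :: l) + ((x :: l).getLast (List.cons_ne_nil _ _)).length
  | x, [] => by simp [superstr, pathWeight]
  | x, y :: r => by
    rw [List.getLast_cons (List.cons_ne_nil _ _), superstr_cons_cons, List.length_append,
      length_superstr_cons y r, length_prefStr, pathWeight]
    omega

lemma pathWeight_append_singleton : ∀ (v : Str) (l : List Str) (x : Str),
    pathWeight (v :: (l ++ [x])) =
      pathWeight (v :: l) + distStr ((v :: l).getLast (List.cons_ne_nil _ _)) x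
  | v, [], x => by simp [pathWeight]
  | v, y :: r, x => by
    rw [List.cons_append, pathWeight, pathWeight_append_singleton y r x, pathWeight,
      List.getLast_cons (List.cons_ne_nil _ _)]
    omega

lemma pathWeight_cons_append_singleton : ∀ (a : Str) (l : List Str) (b : Str),
    pathWeight (a :: (l ++ [b])) = (((a :: l).zip (l ++ [b])).map fun p => distStr p.1 p.2).sum
  | a, [], b => by simp [pathWeight]
  | a, y :: r, b => by
    rw [List.cons_append, pathWeight, pathWeight_cons_append_singleton y r b]
    simp

lemma cycleWeight_cons (v : Str) (l : List Str) :
    cycleWeight (v :: l) = pathWeight (v :: (l ++ [v])) := by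
  rw [cycleWeight, List.rotate_cons_succ, List.rotate_zero, pathWeight_cons_append_singleton]

lemma exists_block (c : List Str) :
    ∃ M, c.headI <+: M ∧ c.headI <:+ M ∧ M.length = c.headI.length + cycleWeight c ∧
      superstr c <+: M := by
  rcases c with _ | ⟨v, l⟩
  · exact ⟨[], List.nil_prefix, List.nil_suffix, rfl, List.prefix_refl _⟩
  refine ⟨superstr (v :: (l ++ [v])), prefix_superstr_cons v _, ?_, ?_,
    superstr_prefix_superstr_append v l [v]⟩
  · simpa using getLast_suffix_superstr v (l ++ [v])
  · rw [length_superstr_cons, cycleWeight_cons]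
    simp [add_comm]

lemma exists_block_of_eq_or_eq_rc (c : List Str) {x : Str}
    (hx : x = c.headI ∨ x = rc c.headI) :
    ∃ M, x <+: M ∧ x <:+ M ∧ M.length = x.length + cycleWeight c ∧
      (superstr c <:+: M ∨ rc (superstr c) <:+: M) := by
  obtain ⟨M, hpre, hsuf, hlen, hsup⟩ := exists_block c
  rcases hx with rfl | rfl
  · exact ⟨M, hpre, hsuf, hlen, Or.inl hsup.isInfix⟩
  · exact ⟨rc M, rc_prefix_rc hsuf, rc_suffix_rc hpre, by simp [hlen],
      Or.inr (rc_infix_rc hsup.isInfix)⟩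

lemma exists_insert_block {w x M : Str} {p n : ℕ} (hx : x <+: w.drop p) (hxne : x ≠ [])
    (hpre : x <+: M) (hsuf : x <:+ M) (hlen : M.length = x.length + n) :
    ∃ w₁ : Str, w₁.length = w.length + n ∧ M <+: w₁.drop p ∧
      (∀ t, p ≤ t → w.drop t = w₁.drop (t + n)) ∧
      ∀ y q, y <+: w.drop q → q + y.length ≤ p + x.length → y <+: w₁.drop q := by
  obtain ⟨b, hb⟩ := hx
  obtain ⟨γ, rfl⟩ := hpre
  obtain ⟨β, hβ⟩ := hsuf
  obtain ⟨A, rfl, rfl⟩ : ∃ A : Str, A.length = p ∧ w = A ++ (x ++ b) := by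
    refine ⟨w.take p, ?_, by rw [hb, List.take_append_drop]⟩
    have := congrArg List.length hb
    have := List.length_pos_iff.2 hxne
    simp only [List.length_append, List.length_drop, List.length_take] at *
    omega
  have hβlen : β.length = n := by
    have := congrArg List.length hβ
    simp only [List.length_append] at this hlen
    omega
  refine ⟨A ++ (x ++ γ ++ b), ?_, ?_, ?_, ?_⟩
  · simp only [List.length_append] at hlen ⊢
    omega
  · rw [List.drop_left' rfl]
    exact List.prefix_append _ _
  · intro t ht
    obtain ⟨k, rfl⟩ := Nat.exists_eq_add_of_le ht
    rw [← hβ, List.drop_length_add_append, List.append_assoc β, ← List.append_assoc A,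
      show A.length + k + n = (A ++ β).length + k by simp; omega, List.drop_length_add_append]
  · intro y q hy hq
    have hPw : A ++ x <+: A ++ (x ++ b) :=
      (List.prefix_append_right_inj A).2 (List.prefix_append x b)
    have hPw₁ : A ++ x <+: A ++ (x ++ γ ++ b) :=
      (List.prefix_append_right_inj A).2 ((List.prefix_append x γ).trans (List.prefix_append _ b))
    exact (prefix_drop_of_prefix_of_le hy hPw (by simp; omega)).trans (hPw₁.drop q)

lemma exists_insert_blocks {ι : Type*} [DecidableEq ι] (D : Finset ι) (x M : ι → Str)
    (n pos : ι → ℕ) (hxne : ∀ i ∈ D, x i ≠ [])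
    (hfree : ∀ i ∈ D, ∀ j ∈ D, x i <:+: x j → i = j)
    (hpre : ∀ i ∈ D, x i <+: M i) (hsuf : ∀ i ∈ D, x i <:+ M i)
    (hlen : ∀ i ∈ D, (M i).length = (x i).length + n i)
    (w : Str) (hocc : ∀ i ∈ D, x i <+: w.drop (pos i)) :
    ∃ w' : Str, w'.length = w.length + ∑ i ∈ D, n i ∧ (∀ i ∈ D, M i <:+: w') ∧
      ∀ t, (∀ i ∈ D, pos i ≤ t) → w.drop t <:+: w' := by
  induction D using Finset.induction_on_max_value pos generalizing w with
  | empty => exact ⟨w, by simp, by simp, fun t _ => (List.drop_suffix t w).isInfix⟩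
  | insert a s ha hmax ih =>
    have hmem : a ∈ insert a s := Finset.mem_insert_self a s
    have hsub : ∀ i ∈ s, i ∈ insert a s := fun i hi => Finset.mem_insert_of_mem hi
    obtain ⟨w₁, hlen₁, hM₁, hshift, hkeep⟩ := exists_insert_block (hocc a hmem) (hxne a hmem)
      (hpre a hmem) (hsuf a hmem) (hlen a hmem)
    have hocc₁ : ∀ i ∈ s, x i <+: w₁.drop (pos i) := by
      intro i hi
      refine hkeep _ _ (hocc i (hsub i hi)) ?_
      -- an occurrence starting left of `x a` ends before it, as `x a` is not inside it
      by_contra! hlt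
      have hai := hfree a hmem i (hsub i hi)
        (infix_of_prefix_drop_of_le (hocc i (hsub i hi)) (hocc a hmem) (hmax i hi) hlt.le)
      exact ha (hai ▸ hi)
    obtain ⟨w', hlen', hM', hguard⟩ := ih (fun i hi => hxne i (hsub i hi))
      (fun i hi j hj => hfree i (hsub i hi) j (hsub j hj)) (fun i hi => hpre i (hsub i hi))
      (fun i hi => hsuf i (hsub i hi)) (fun i hi => hlen i (hsub i hi)) w₁ hocc₁
    refine ⟨w', ?_, ?_, ?_⟩
    · rw [Finset.sum_insert ha, hlen', hlen₁]
      ring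
    · intro i hi
      rcases Finset.mem_insert.1 hi with rfl | hi
      · exact hM₁.isInfix.trans (hguard _ hmax)
      · exact hM' i hi
    · intro t ht
      rw [hshift t (ht a hmem)]
      exact hguard _ fun i hi => (ht i (hsub i hi)).trans (Nat.le_add_right _ _)

lemma rc_injective : Function.Injective rc := fun x y h => by
  simpa using congrArg rc h

lemma SubstrFree.eq_of_infix {S : Finset Str} (hS : SubstrFree S) {x y : Str}
    (hx : x ∈ S ∨ rc x ∈ S) (hy : y ∈ S ∨ rc y ∈ S) (h : x <:+: y) : x = y :=
  by_contra fun hne => hS x hx y hy hne h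

lemma ne_nil_of_forall_rc_ne {S : Finset Str} (hrc : ∀ s ∈ S, rc s ≠ s) {x : Str}
    (hx : x ∈ S ∨ rc x ∈ S) : x ≠ [] := by
  rintro rfl
  exact hrc [] (hx.elim id id) rfl

namespace IsCycleCover

variable {S : Finset Str} {C : Finset (List Str)} {c d : List Str} {x : Str}

lemma rc_ne (hC : IsCycleCover S C) {s : Str} (hs : s ∈ S) : rc s ≠ s := by
  intro h
  rcases hC.2.2.2.2 s hs with ⟨h₁, h₂⟩ | ⟨h₁, h₂⟩ <;> simp only [h] at h₁ h₂ <;> contradiction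

lemma headI_mem (hC : IsCycleCover S C) (hc : c ∈ C) : c.headI ∈ c := by
  rcases c with _ | ⟨v, l⟩
  · exact absurd rfl (hC.1 _ hc)
  · exact List.mem_cons_self

lemma mem_or_rc_mem (hC : IsCycleCover S C) (hc : c ∈ C) (hx : x ∈ c) : x ∈ S ∨ rc x ∈ S :=
  hC.2.2.2.1 c hc x hx

lemma eq_of_mem (hC : IsCycleCover S C) (hc : c ∈ C) (hd : d ∈ C) (hxc : x ∈ c)
    (hxd : x ∈ d) : c = d :=
  by_contra fun h => hC.2.2.1 c hc d hd h x hxc hxd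

lemma rc_not_mem (hC : IsCycleCover S C) (hc : c ∈ C) (hd : d ∈ C) (hxc : x ∈ c) :
    rc x ∉ d := by
  intro hxd
  have hboth : ∀ s ∈ S, (∃ c ∈ C, s ∈ c) → (∃ c ∈ C, rc s ∈ c) → False :=
    fun s hs h₁ h₂ => by rcases hC.2.2.2.2 s hs with ⟨-, h⟩ | ⟨-, h⟩ <;> contradiction
  rcases hC.mem_or_rc_mem hc hxc with hs | hs
  · exact hboth x hs ⟨c, hc, hxc⟩ ⟨d, hd, hxd⟩
  · exact hboth (rc x) hs ⟨d, hd, hxd⟩ ⟨c, hc, by rwa [rc_rc]⟩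

lemma eq_of_headI_eq_or_eq_rc (hC : IsCycleCover S C) (hc : c ∈ C) (hd : d ∈ C)
    (h : c.headI = d.headI ∨ c.headI = rc d.headI) : c = d := by
  rcases h with e | e
  · exact hC.eq_of_mem hc hd (hC.headI_mem hc) (by rw [e]; exact hC.headI_mem hd)
  · exact (hC.rc_not_mem hd hc (hC.headI_mem hd) (by rw [← e]; exact hC.headI_mem hc)).elim

end IsCycleCover

lemma isCycleCover_singleton {S : Finset Str} {L : List Str} (hL : L ≠ []) (hnd : L.Nodup)
    (hmem : ∀ x ∈ L, x ∈ S ∨ rc x ∈ S) (hxor : ∀ s ∈ S, Xor (s ∈ L) (rc s ∈ L)) :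
    IsCycleCover S {L} := by
  simpa [IsCycleCover] using ⟨hL, hnd, hmem, hxor⟩

/-- An orientation of `s` occurring in `u`, the same one for `s` and `rc s`; arbitrary if neither
occurs. -/
noncomputable def orientIn (u s : Str) : Str :=
  Classical.epsilon fun t => (t = s ∨ t = rc s) ∧ t <:+: u

lemma orientIn_rc (u s : Str) : orientIn u (rc s) = orientIn u s := by
  unfold orientIn
  congr 1
  funext t
  rw [rc_rc, or_comm]

lemma orientIn_spec {u s : Str} (h : s <:+: u ∨ rc s <:+: u) :
    (orientIn u s = s ∨ orientIn u s = rc s) ∧ orientIn u s <:+: u :=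
  Classical.epsilon_spec (p := fun t => (t = s ∨ t = rc s) ∧ t <:+: u)
    (h.elim (fun h => ⟨s, Or.inl rfl, h⟩) fun h => ⟨rc s, Or.inr rfl, h⟩)

lemma orientIn_orientIn {u s : Str} (h : s <:+: u ∨ rc s <:+: u) :
    orientIn u (orientIn u s) = orientIn u s := by
  rcases (orientIn_spec h).1 with e | e
  · conv_lhs => rw [e]
  · conv_lhs => rw [e, orientIn_rc]

lemma eq_or_eq_rc_of_orientIn_eq {u s t : Str} (hs : s <:+: u ∨ rc s <:+: u)
    (ht : t <:+: u ∨ rc t <:+: u) (h : orientIn u s = orientIn u t) : s = t ∨ s = rc t := by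
  rcases (orientIn_spec hs).1 with e₁ | e₁ <;> rcases (orientIn_spec ht).1 with e₂ | e₂ <;>
    rw [e₁, e₂] at h
  · exact Or.inl h
  · exact Or.inr h
  · exact Or.inr (by rw [← h, rc_rc])
  · exact Or.inl (rc_injective h)

lemma mem_or_rc_mem_and_infix_of_mem_image_orientIn {S : Finset Str} {u v : Str}
    (hu : ApproxSol S u) (hv : v ∈ S.image (orientIn u)) : (v ∈ S ∨ rc v ∈ S) ∧ v <:+: u := by
  obtain ⟨s, hs, rfl⟩ := Finset.mem_image.1 hv
  obtain ⟨h | h, hinf⟩ := orientIn_spec (hu s hs)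
  · exact ⟨Or.inl (by rwa [h]), hinf⟩
  · exact ⟨Or.inr (by rwa [h, rc_rc]), hinf⟩

lemma xor_mem_image_orientIn {S : Finset Str} (hrc : ∀ s ∈ S, rc s ≠ s) {u s : Str}
    (hu : ApproxSol S u) (hs : s ∈ S) :
    Xor (s ∈ S.image (orientIn u)) (rc s ∈ S.image (orientIn u)) := by
  have hfix : ∀ v ∈ S.image (orientIn u), orientIn u v = v := by
    simp only [Finset.mem_image]
    rintro _ ⟨t, ht, rfl⟩
    exact orientIn_orientIn (hu t ht)
  have hboth : ¬ (s ∈ S.image (orientIn u) ∧ rc s ∈ S.image (orientIn u)) := fun ⟨h₁, h₂⟩ =>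
    hrc s hs ((hfix _ h₂).symm.trans ((orientIn_rc u s).trans (hfix s h₁)))
  have hmem := Finset.mem_image_of_mem (orientIn u) hs
  rcases (orientIn_spec (hu s hs)).1 with h | h <;> rw [h] at hmem
  · exact Or.inl ⟨hmem, fun h' => hboth ⟨hmem, h'⟩⟩
  · exact Or.inr ⟨hmem, fun h' => hboth ⟨h', hmem⟩⟩

lemma exists_list_isChain_lt {α : Type*} [DecidableEq α] (V : Finset α) (f : α → ℕ)
    (hf : Set.InjOn f V) :
    ∃ L : List α, L.toFinset = V ∧ L.Nodup ∧ L.IsChain (fun a b => f a < f b) := by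
  set L := V.toList.mergeSort fun a b => decide (f a ≤ f b)
  have hperm : L.Perm V.toList := List.mergeSort_perm _ _
  have hmem : ∀ a, a ∈ L ↔ a ∈ V := fun a => hperm.mem_iff.trans Finset.mem_toList
  have hnd : L.Nodup := hperm.nodup_iff.2 V.nodup_toList
  have hle : L.Pairwise fun a b => f a ≤ f b := by
    simpa using List.pairwise_mergeSort (le := fun a b => decide (f a ≤ f b))
      (fun a b c => by simp only [decide_eq_true_eq]; omega)
      (fun a b => by simp only [Bool.or_eq_true, decide_eq_true_eq]; omega) V.toList
  refine ⟨L, by ext a; simp [hmem], hnd, List.Pairwise.isChain ?_⟩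
  exact (hle.and hnd).imp_of_mem fun ha hb h =>
    lt_of_le_of_ne h.1 fun he => h.2 (hf ((hmem _).1 ha) ((hmem _).1 hb) he)

lemma pathWeight_add_le {u : Str} {pos : Str → ℕ} : ∀ {v : Str} {l : List Str},
    (∀ z ∈ v :: l, z <+: u.drop (pos z)) → (∀ y ∈ v :: l, ∀ z ∈ v :: l, y <:+: z → y = z) →
    (v :: l).IsChain (fun a b => pos a < pos b) →
    pathWeight (v :: l) + pos v ≤ pos ((v :: l).getLast (List.cons_ne_nil _ _))
  | v, [], _, _, _ => by simp [pathWeight]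
  | v, z :: l, hocc, hfree, hch => by
    rw [List.isChain_cons_cons] at hch
    have hvz : distStr v z ≤ pos z - pos v :=
      distStr_le_sub (hocc v (by simp)) (hocc z (by simp)) hch.1
        fun h => hch.1.ne (congrArg pos (hfree z (by simp) v (by simp) h)).symm
    have ih := pathWeight_add_le (fun y hy => hocc y (List.mem_cons_of_mem v hy))
      (fun y hy z hz => hfree y (List.mem_cons_of_mem v hy) z (List.mem_cons_of_mem v hz)) hch.2
    rw [pathWeight, List.getLast_cons (List.cons_ne_nil _ _)]
    omega

lemma cycleWeight_le_length {u : Str} {pos : Str → ℕ} {l : List Str}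
    (hocc : ∀ z ∈ l, z <+: u.drop (pos z)) (hne : ∀ z ∈ l, z ≠ [])
    (hfree : ∀ y ∈ l, ∀ z ∈ l, y <:+: z → y = z) (hch : l.IsChain (fun a b => pos a < pos b)) :
    cycleWeight l ≤ u.length := by
  rcases l with _ | ⟨v, l⟩
  · exact Nat.zero_le _
  rw [cycleWeight_cons, pathWeight_append_singleton]
  set z := (v :: l).getLast (List.cons_ne_nil _ _)
  have hz : z ∈ v :: l := List.getLast_mem _
  have hpath : pathWeight (v :: l) + pos v ≤ pos z := pathWeight_add_le hocc hfree hch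
  have hend : pos z + z.length ≤ u.length := by
    have h₁ := (hocc z hz).length_le
    have h₂ := List.length_pos_iff.2 (hne z hz)
    rw [List.length_drop] at h₁
    omega
  have hlast : distStr z v ≤ z.length := Nat.sub_le _ _
  omega

lemma exists_isCycleCover_coverWeight_le {S : Finset Str} (hS : SubstrFree S)
    (hrc : ∀ s ∈ S, rc s ≠ s) {u : Str} (hu : ApproxSol S u) :
    ∃ C, IsCycleCover S C ∧ coverWeight C ≤ u.length := by
  rcases S.eq_empty_or_nonempty with rfl | hSne
  · exact ⟨∅, by simp [IsCycleCover], by simp [coverWeight]⟩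
  set V := S.image (orientIn u)
  have hV : ∀ v ∈ V, (v ∈ S ∨ rc v ∈ S) ∧ v <:+: u := fun v hv =>
    mem_or_rc_mem_and_infix_of_mem_image_orientIn hu hv
  have hxor : ∀ s ∈ S, Xor (s ∈ V) (rc s ∈ V) := fun s hs =>
    xor_mem_image_orientIn hrc hu hs
  have hfree : ∀ y ∈ V, ∀ z ∈ V, y <:+: z → y = z := fun y hy z hz =>
    hS.eq_of_infix (hV y hy).1 (hV z hz).1
  obtain ⟨pos, hpos⟩ := exists_forall_infix_prefix_drop u
  have hinj : Set.InjOn pos V := by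
    intro y hy z hz h
    have hy' := hpos y (hV y hy).2
    rw [h] at hy'
    rcases List.prefix_or_prefix_of_prefix hy' (hpos z (hV z hz).2) with h' | h'
    · exact hfree y hy z hz h'.isInfix
    · exact (hfree z hz y hy h'.isInfix).symm
  obtain ⟨L, hLV, hnd, hch⟩ := exists_list_isChain_lt V pos hinj
  have hmemL : ∀ x, x ∈ L ↔ x ∈ V := fun x => by rw [← hLV, List.mem_toFinset]
  have hLne : L ≠ [] := by
    obtain ⟨s, hs⟩ := hSne
    exact List.ne_nil_of_mem ((hmemL _).2 (Finset.mem_image_of_mem _ hs))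
  refine ⟨{L}, isCycleCover_singleton hLne hnd (fun x hx => (hV x ((hmemL x).1 hx)).1)
    (fun s hs => by simpa only [hmemL] using hxor s hs), ?_⟩
  rw [coverWeight, Finset.sum_singleton]
  exact cycleWeight_le_length (fun z hz => hpos z (hV z ((hmemL z).1 hz)).2)
    (fun z hz => ne_nil_of_forall_rc_ne hrc (hV z ((hmemL z).1 hz)).1)
    (fun y hy z hz => hfree y ((hmemL y).1 hy) z ((hmemL z).1 hz)) hch

lemma exists_approxSol_image_superstr {S : Finset Str} (hS : SubstrFree S)
    {C : Finset (List Str)} (hC : IsCycleCover S C) {u : Str} (hu : ApproxSol S u) :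
    ∃ w, ApproxSol (C.image superstr) w ∧ w.length = u.length + coverWeight C := by
  have hhead : ∀ c ∈ C, c.headI <:+: u ∨ rc c.headI <:+: u := fun c hc => by
    rcases hC.mem_or_rc_mem hc (hC.headI_mem hc) with h | h
    · exact hu _ h
    · simpa [or_comm] using hu _ h
  set x : List Str → Str := fun c => orientIn u c.headI
  have hx : ∀ c ∈ C, (x c = c.headI ∨ x c = rc c.headI) ∧ x c <:+: u :=
    fun c hc => orientIn_spec (hhead c hc)
  have hxS : ∀ c ∈ C, x c ∈ S ∨ rc (x c) ∈ S := fun c hc => by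
    have h := hC.mem_or_rc_mem hc (hC.headI_mem hc)
    rcases (hx c hc).1 with e | e <;> rw [e]
    · exact h
    · rw [rc_rc]
      exact h.symm
  have hfree : ∀ c ∈ C, ∀ d ∈ C, x c <:+: x d → c = d := fun c hc d hd h =>
    hC.eq_of_headI_eq_or_eq_rc hc hd (eq_or_eq_rc_of_orientIn_eq (hhead c hc) (hhead d hd)
      (hS.eq_of_infix (hxS c hc) (hxS d hd) h))
  obtain ⟨pos, hpos⟩ := exists_forall_infix_prefix_drop u
  choose! M hM using fun c (hc : c ∈ C) => exists_block_of_eq_or_eq_rc c (hx c hc).1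
  obtain ⟨w, hw, hMw, -⟩ := exists_insert_blocks C x M cycleWeight (fun c => pos (x c))
    (fun c hc => ne_nil_of_forall_rc_ne (fun s hs => hC.rc_ne hs) (hxS c hc)) hfree
    (fun c hc => (hM c hc).1) (fun c hc => (hM c hc).2.1) (fun c hc => (hM c hc).2.2.1)
    u (fun c hc => hpos _ (hx c hc).2)
  refine ⟨w, ?_, hw⟩
  simp only [ApproxSol, Finset.mem_image]
  rintro _ ⟨c, hc, rfl⟩
  exact (hM c hc).2.2.2.imp (·.trans (hMw c hc)) (·.trans (hMw c hc))

lemma exists_approxSol_length_eq_OPT (S : Finset Str) :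
    ∃ u, ApproxSol S u ∧ u.length = OPT S :=
  Nat.sInf_mem (s := {n | ∃ u : Str, ApproxSol S u ∧ u.length = n}) ⟨_, S.toList.flatten,
    fun _ hs => Or.inl (List.infix_of_mem_flatten (Finset.mem_toList.2 hs)), rfl⟩

lemma OPT_le {S : Finset Str} {v : Str} (h : ApproxSol S v) : OPT S ≤ v.length :=
  Nat.sInf_le ⟨v, h, rfl⟩

/-- for the set `T` of strings corresponding to the cycles of an optimal
cycle cover, `OPT(T) ≤ OPT(S) + w(CYC(G_S)) ≤ 2·OPT(S)`. -/
theorem opt_T_le_two_opt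
    (S : Finset Str) (hS : SubstrFree S)
    (C : Finset (List Str)) (hC : IsCycleCover S C)
    (hopt : ∀ C', IsCycleCover S C' → coverWeight C ≤ coverWeight C') :
    OPT (C.image superstr) ≤ OPT S + coverWeight C ∧
    OPT S + coverWeight C ≤ 2 * OPT S := by
  obtain ⟨u, hu, hulen⟩ := exists_approxSol_length_eq_OPT S
  have hcover : coverWeight C ≤ OPT S := by
    obtain ⟨C', hC', hw⟩ := exists_isCycleCover_coverWeight_le hS (fun s hs => hC.rc_ne hs) hu
    exact hulen ▸ (hopt C' hC').trans hw
  obtain ⟨w, hw, hwlen⟩ := exists_approxSol_image_superstr hS hC hu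
  have hT : OPT (C.image superstr) ≤ OPT S + coverWeight C := hulen ▸ hwlen ▸ OPT_le hw
  exact ⟨hT, by omega⟩
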